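/- arXiv:2212.08645 — 6 statements merged into one kernel-verified Lean document; each statement's English description precedes it below -/
import Mathlib

section
/- Let (Ω, 𝓐, P) be a probability space with sub-σ-algebras 𝔪_{XY}, 𝔪_{YZ}, 𝔪_Y as in the context. Then the following two conditions are equivalent: (i) for all g₁ ∈ E₁ and all h₁ ∈ E₂, E[g₁·h₁] = 0; (ii) for all g ∈ L²_{XY} and all h ∈ L²_{YZ}, E[g·h | 𝔪_Y] = E[g | 𝔪_Y] · E[h | 𝔪_Y] almost surely. -/
open MeasureTheory

private lemma int_mul_of_L2 {Ω : Type*} {𝓐 : MeasurableSpace Ω} {P : Measure Ω}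
    {f g : Ω → ℝ} (hf : MemLp f 2 P) (hg : MemLp g 2 P) :
    Integrable (fun ω => f ω * g ω) P := by
  rw [← memLp_one_iff_integrable]
  have h := MemLp.smul (p := 2) (q := 2) (r := 1) hg hf
    (hpqr := ⟨by simp [ENNReal.inv_two_add_inv_two]⟩)
  exact h

private lemma memL2_condexp {Ω : Type*} {m : MeasurableSpace Ω} {𝓐 : MeasurableSpace Ω}
    {P : Measure Ω} [IsFiniteMeasure P] (hm : m ≤ 𝓐)
    {f : Ω → ℝ} (hf : MemLp f 2 P) : MemLp (P[f|m]) 2 P := by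
  haveI : SigmaFinite (P.trim hm) := inferInstance
  set F : Lp ℝ 2 P := hf.toLp f with hF
  set c : Ω → ℝ := ((condExpL2 ℝ ℝ hm F : Ω →₂[P] ℝ) : Ω → ℝ) with hc
  have hae : c =ᵐ[P] P[f|m] := by
    refine ae_eq_condExp_of_forall_setIntegral_eq hm (hf.integrable one_le_two)
      (fun s hs hμs => ?_) (fun s hs hμs => ?_) ?_
    · exact integrableOn_condExpL2_of_measure_ne_top hm hμs.ne F
    · rw [integral_condExpL2_eq hm F hs hμs.ne]
      exact setIntegral_congr_ae (hm s hs) ((hf.coeFn_toLp).mono fun x hx _ => hx)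
    · exact aestronglyMeasurable_condExpL2 hm F
  exact (Lp.memLp (condExpL2 ℝ ℝ hm F : Ω →₂[P] ℝ)).ae_eq hae

/-- Theorem 1 of Daudin (1980): with `E₁ = {g ∈ L²_{XY} : E[g|𝔪_Y] = 0}` and
`E₂ = {h ∈ L²_{YZ} : E[h|𝔪_Y] = 0}`, the condition `E[g₁ h₁] = 0` for all `g₁ ∈ E₁`,
`h₁ ∈ E₂` is equivalent to `E[gh|𝔪_Y] = E[g|𝔪_Y] E[h|𝔪_Y]` a.s. for all
`g ∈ L²_{XY}`, `h ∈ L²_{YZ}`. -/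
theorem daudin_main
    {Ω : Type*} {𝓐 : MeasurableSpace Ω} {P : Measure Ω} [IsProbabilityMeasure P]
    (mXY mYZ mY : MeasurableSpace Ω)
    (hXY : mXY ≤ 𝓐) (hYZ : mYZ ≤ 𝓐)
    (hYXY : mY ≤ mXY) (hYYZ : mY ≤ mYZ) :
    ((∀ g₁ : Ω → ℝ, MemLp g₁ 2 P → Measurable[mXY] g₁ → P[g₁|mY] =ᵐ[P] 0 →
        ∀ h₁ : Ω → ℝ, MemLp h₁ 2 P → Measurable[mYZ] h₁ → P[h₁|mY] =ᵐ[P] 0 →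
          ∫ ω, g₁ ω * h₁ ω ∂P = 0) ↔
      (∀ g : Ω → ℝ, MemLp g 2 P → Measurable[mXY] g →
        ∀ h : Ω → ℝ, MemLp h 2 P → Measurable[mYZ] h →
          P[fun ω => g ω * h ω|mY] =ᵐ[P] fun ω => (P[g|mY]) ω * (P[h|mY]) ω)) := by
  have hY : mY ≤ 𝓐 := hYXY.trans hXY
  haveI : SigmaFinite (P.trim hY) := inferInstance
  constructor
  · -- (i) → (ii)
    intro H g hg hgm h hh hhm
    set a : Ω → ℝ := P[g|mY] with ha
    set b : Ω → ℝ := P[h|mY] with hb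
    have ham : StronglyMeasurable[mY] a := stronglyMeasurable_condExp
    have hbm : StronglyMeasurable[mY] b := stronglyMeasurable_condExp
    have ha2 : MemLp a 2 P := memL2_condexp hY hg
    have hb2 : MemLp b 2 P := memL2_condexp hY hh
    have hgi : Integrable g P := hg.integrable one_le_two
    have hhi : Integrable h P := hh.integrable one_le_two
    set g' : Ω → ℝ := g - a with hg'
    set h' : Ω → ℝ := h - b with hh'
    have hg'2 : MemLp g' 2 P := hg.sub ha2
    have hh'2 : MemLp h' 2 P := hh.sub hb2
    have hg'i : Integrable g' P := hg'2.integrable one_le_two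
    have hh'i : Integrable h' P := hh'2.integrable one_le_two
    have hg'm : Measurable[mXY] g' :=
      hgm.sub ((ham.measurable).mono hYXY le_rfl)
    have hh'm : Measurable[mYZ] h' :=
      hhm.sub ((hbm.measurable).mono hYYZ le_rfl)
    have hca : P[a|mY] = a := condExp_of_stronglyMeasurable hY ham integrable_condExp
    have hcb : P[b|mY] = b := condExp_of_stronglyMeasurable hY hbm integrable_condExp
    have hg'0 : P[g'|mY] =ᵐ[P] 0 := by
      refine (condExp_sub hgi integrable_condExp _).trans ?_
      rw [hca]
      filter_upwards with ω
      simp [ha]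
    have hh'0 : P[h'|mY] =ᵐ[P] 0 := by
      refine (condExp_sub hhi integrable_condExp _).trans ?_
      rw [hcb]
      filter_upwards with ω
      simp [hb]
    -- key: conditional expectation of g' * h' vanishes
    have h1 : Integrable (fun ω => g' ω * h' ω) P := int_mul_of_L2 hg'2 hh'2
    have hcross : P[fun ω => g' ω * h' ω|mY] =ᵐ[P] 0 := by
      have : (0 : Ω → ℝ) =ᵐ[P] P[fun ω => g' ω * h' ω|mY] := by
        refine ae_eq_condExp_of_forall_setIntegral_eq hY h1
          (fun s hs hμs => integrableOn_zero)
          (fun s hs hμs => ?_)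
          ⟨0, stronglyMeasurable_zero, ae_eq_refl _⟩
        -- apply the hypothesis to the indicator of g'
        have hind : ∫ ω, (s.indicator g') ω * h' ω ∂P = 0 := by
          refine H (s.indicator g') (hg'2.indicator (hY s hs))
            (hg'm.indicator (hYXY s hs)) ?_ h' hh'2 hh'm hh'0
          refine (condExp_indicator hg'i hs).trans ?_
          filter_upwards [hg'0] with ω hω
          simp only [Pi.zero_apply] at hω ⊢
          by_cases hmem : ω ∈ s
          · simp [Set.indicator_of_mem hmem, hω]
          · simp [Set.indicator_of_notMem hmem]
        have hset : ∫ x in s, g' x * h' x ∂P = 0 := by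
          have hii := @integral_indicator Ω ℝ 𝓐 _ _ (fun x => g' x * h' x) s P (hY s hs)
          rw [← hii, ← hind]
          congr 1
          funext ω
          by_cases hmem : ω ∈ s <;> simp [Set.indicator_apply, hmem]
        simp [hset]
      exact this.symm
    have h2 : Integrable (fun ω => b ω * g' ω) P := int_mul_of_L2 hb2 hg'2
    have h3 : Integrable (fun ω => a ω * h' ω) P := int_mul_of_L2 ha2 hh'2
    have h4 : Integrable (fun ω => a ω * b ω) P := int_mul_of_L2 ha2 hb2
    have e2 : P[fun ω => b ω * g' ω|mY] =ᵐ[P] 0 := by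
      have := condExp_mul_of_stronglyMeasurable_left (μ := P) hbm h2 hg'i
      refine this.trans ?_
      filter_upwards [hg'0] with ω hω
      simp only [Pi.mul_apply]
      rw [hω]
      simp
    have e3 : P[fun ω => a ω * h' ω|mY] =ᵐ[P] 0 := by
      have := condExp_mul_of_stronglyMeasurable_left (μ := P) ham h3 hh'i
      refine this.trans ?_
      filter_upwards [hh'0] with ω hω
      simp only [Pi.mul_apply]
      rw [hω]
      simp
    have e4 : P[fun ω => a ω * b ω|mY] = fun ω => a ω * b ω :=
      condExp_of_stronglyMeasurable hY (ham.mul hbm) h4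
    have hfun : (fun ω => g ω * h ω) =
        ((fun ω => g' ω * h' ω) + (fun ω => b ω * g' ω) + (fun ω => a ω * h' ω)
          + fun ω => a ω * b ω) := by
      funext ω
      simp only [Pi.add_apply, hg', hh', Pi.sub_apply]
      ring
    rw [hfun]
    have hA := condExp_add (μ := P) (m := mY) ((h1.add h2).add h3) h4
    have hB := condExp_add (μ := P) (m := mY) (h1.add h2) h3
    have hC := condExp_add (μ := P) (m := mY) h1 h2
    refine hA.trans ?_
    rw [e4]
    filter_upwards [hB, hC, hcross, e2, e3] with ω hBω hCω h1ω h2ω h3ω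
    simp only [Pi.add_apply] at hBω hCω ⊢
    rw [hBω, hCω, h1ω, h2ω, h3ω]
    simp
  · -- (ii) → (i)
    intro H g₁ hg₁ hg₁m hg₁0 h₁ hh₁ hh₁m hh₁0
    have hint : Integrable (fun ω => g₁ ω * h₁ ω) P := int_mul_of_L2 hg₁ hh₁
    have hz : P[fun ω => g₁ ω * h₁ ω|mY] =ᵐ[P] 0 := by
      refine (H g₁ hg₁ hg₁m h₁ hh₁ hh₁m).trans ?_
      filter_upwards [hg₁0, hh₁0] with ω hω₁ hω₂
      simp only [Pi.zero_apply] at hω₁ hω₂ ⊢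
      rw [hω₁, hω₂]
      simp
    calc ∫ ω, g₁ ω * h₁ ω ∂P = ∫ ω, (P[fun ω => g₁ ω * h₁ ω|mY]) ω ∂P :=
          (integral_condExp hY).symm
      _ = ∫ ω, (0 : Ω → ℝ) ω ∂P := integral_congr_ae hz
      _ = 0 := by simp
end

section
/- Let (Ω, 𝓐, P) be a probability space with sub-σ-algebras 𝔪_{XY}, 𝔪_{YZ}, 𝔪_Y as in the context. Then the following two conditions are equivalent: (i) for all g ∈ L²_{XY} and all h₁ ∈ E₂, E[g·h₁] = 0; (ii) for all g ∈ L²_{XY} and all h ∈ L²_{YZ}, E[g·h | 𝔪_Y] = E[g | 𝔪_Y] · E[h | 𝔪_Y] almost surely. -/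
open MeasureTheory
open scoped ENNReal

lemma daudin_mul_integrable {Ω : Type*} {𝓐 : MeasurableSpace Ω} {P : Measure Ω}
    [IsFiniteMeasure P] {g h : Ω → ℝ} (hg : MemLp g 2 P) (hh : MemLp h 2 P) :
    Integrable (fun ω => g ω * h ω) P := by
  have h1 : (1 : ℝ≥0∞) / 1 = 1 / 2 + 1 / 2 := by
    rw [ENNReal.div_add_div_same, one_add_one_eq_two,
      div_one]
    exact (ENNReal.div_self (by norm_num) (by norm_num)).symm
  have : MemLp (g • h) 1 P := hh.smul hg (hpqr := ⟨by simpa [one_div] using h1.symm⟩)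
  exact this.integrable le_rfl

lemma daudin_memLp2_condexp {Ω : Type*} {m 𝓐 : MeasurableSpace Ω} {P : Measure Ω}
    [IsProbabilityMeasure P] (hm : m ≤ 𝓐) {h : Ω → ℝ}
    (hh : MemLp h 2 P) : MemLp (P[h|m]) 2 P := by
  set f : Lp ℝ 2 P := hh.toLp h with hf
  set f₂ := condExpL2 ℝ ℝ hm f with hf₂
  have hmeas : AEStronglyMeasurable[m] (f₂ : Ω → ℝ) P := lpMeas.aestronglyMeasurable f₂
  have hmem : MemLp (f₂ : Ω → ℝ) 2 P := Lp.memLp f₂.val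
  have hint : Integrable (f₂ : Ω → ℝ) P := hmem.integrable one_le_two
  have heq : (f₂ : Ω → ℝ) =ᵐ[P] P[h|m] := by
    refine ae_eq_condExp_of_forall_setIntegral_eq hm (hh.integrable one_le_two)
      (fun s _ _ => hint.integrableOn)
      (fun s hs hμs => ?_) hmeas
    have h1 : ∫ x in s, (f₂ : Ω → ℝ) x ∂P = ∫ x in s, f x ∂P :=
      integral_condExpL2_eq hm f hs hμs.ne
    rw [h1]
    exact setIntegral_congr_ae (hm s hs) ((hh.coeFn_toLp).mono fun x hx _ => hx)
  exact hmem.ae_eq heq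

theorem daudin_core
    {Ω : Type*} (mXY mYZ mY : MeasurableSpace Ω) {𝓐 : MeasurableSpace Ω} {P : Measure Ω}
    [IsProbabilityMeasure P]
    (hXY : mXY ≤ 𝓐) (hYZ : mYZ ≤ 𝓐)
    (hYXY : mY ≤ mXY) (hYYZ : mY ≤ mYZ) :
    ((∀ g : Ω → ℝ, MemLp g 2 P → Measurable[mXY] g →
        ∀ h₁ : Ω → ℝ, MemLp h₁ 2 P → Measurable[mYZ] h₁ → P[h₁|mY] =ᵐ[P] 0 →
          ∫ ω, g ω * h₁ ω ∂P = 0) ↔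
      (∀ g : Ω → ℝ, MemLp g 2 P → Measurable[mXY] g →
        ∀ h : Ω → ℝ, MemLp h 2 P → Measurable[mYZ] h →
          P[fun ω => g ω * h ω|mY] =ᵐ[P] fun ω => (P[g|mY]) ω * (P[h|mY]) ω)) := by
  have hmY : mY ≤ 𝓐 := hYYZ.trans hYZ
  constructor
  · -- forward direction
    intro H g hg2 hgm h hh2 hhm
    set e : Ω → ℝ := P[h|mY] with he
    have he2 : MemLp e 2 P := daudin_memLp2_condexp hmY hh2
    have heSM : StronglyMeasurable[mY] e := stronglyMeasurable_condExp
    have heM : Measurable[mY] e := heSM.measurable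
    set h₁ : Ω → ℝ := fun ω => h ω - e ω with hh₁def
    have hh₁2 : MemLp h₁ 2 P := hh2.sub he2
    have hh₁m : Measurable[mYZ] h₁ := (hhm.sub (heM.mono hYYZ le_rfl))
    have hInt_h : Integrable h P := hh2.integrable one_le_two
    have hInt_e : Integrable e P := he2.integrable one_le_two
    have hcond_h₁ : P[h₁|mY] =ᵐ[P] 0 := by
      have h1 : P[h₁|mY] =ᵐ[P] P[h|mY] - P[e|mY] := condExp_sub hInt_h hInt_e mY
      have h2 : P[e|mY] = e := condExp_of_stronglyMeasurable hmY heSM hInt_e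
      filter_upwards [h1] with ω hω
      rw [hω, Pi.sub_apply, h2]
      simp [he]
    have hInt_gh₁ : Integrable (fun ω => g ω * h₁ ω) P := daudin_mul_integrable hg2 hh₁2
    have hInt_ge : Integrable (fun ω => g ω * e ω) P := daudin_mul_integrable hg2 he2
    -- key: E[g h₁ | mY] = 0 a.s.
    have hkey : (0 : Ω → ℝ) =ᵐ[P] P[fun ω => g ω * h₁ ω|mY] := by
      refine ae_eq_condExp_of_forall_setIntegral_eq hmY hInt_gh₁
        (fun s _ _ => integrableOn_zero) (fun s hs _ => ?_)
        ((stronglyMeasurable_zero : StronglyMeasurable[mY] (0 : Ω → ℝ)).aestronglyMeasurable)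
      simp only [Pi.zero_apply, integral_zero]
      have hsA : MeasurableSet s := hmY s hs
      have hg'2 : MemLp (s.indicator g) 2 P := hg2.indicator hsA
      have hg'm : Measurable[mXY] (s.indicator g) := hgm.indicator (hYXY s hs)
      have hH := H (s.indicator g) hg'2 hg'm h₁ hh₁2 hh₁m hcond_h₁
      rw [← hH, ← integral_indicator hsA]
      congr 1
      ext ω
      by_cases hω : ω ∈ s <;> simp [hω]
    -- pull-out property
    have hpull : P[fun ω => e ω * g ω|mY] =ᵐ[P] e * P[g|mY] := by
      have hcomm : (fun ω => e ω * g ω) = fun ω => g ω * e ω := by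
        ext ω; ring
      have hInt_eg : Integrable (e * g) P := by
        have : (e * g) = fun ω => g ω * e ω := by
          ext ω; simp only [Pi.mul_apply]; ring
        rw [this]; exact hInt_ge
      exact condExp_mul_of_stronglyMeasurable_left heSM hInt_eg (hg2.integrable one_le_two)
    have hsplit : (fun ω => g ω * h ω) = fun ω => g ω * h₁ ω + g ω * e ω := by
      ext ω; simp only [hh₁def]; ring
    calc P[fun ω => g ω * h ω|mY]
        = P[fun ω => g ω * h₁ ω + g ω * e ω|mY] := by rw [hsplit]
      _ =ᵐ[P] P[fun ω => g ω * h₁ ω|mY] + P[fun ω => g ω * e ω|mY] :=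
          condExp_add hInt_gh₁ hInt_ge mY
      _ =ᵐ[P] fun ω => (P[g|mY]) ω * (P[h|mY]) ω := by
          have hge : (fun ω => g ω * e ω) = fun ω => e ω * g ω := by ext ω; ring
          rw [hge]
          filter_upwards [hkey, hpull] with ω h0 hp
          simp only [Pi.add_apply, Pi.mul_apply, Pi.zero_apply] at *
          rw [← h0, hp]
          ring
  · -- reverse direction
    intro H g hg2 hgm h₁ hh₁2 hh₁m hcond
    have hInt : Integrable (fun ω => g ω * h₁ ω) P := daudin_mul_integrable hg2 hh₁2
    rw [← integral_condExp hmY]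
    have hz : P[fun ω => g ω * h₁ ω|mY] =ᵐ[P] 0 := by
      filter_upwards [H g hg2 hgm h₁ hh₁2 hh₁m, hcond] with ω h1 h2
      simp only [Pi.zero_apply] at *
      rw [h1, h2]; ring
    rw [integral_congr_ae hz]
    simp

/-- Equation 3.8 of Daudin (1980): with `E₂ = {h ∈ L²_{YZ} : E[h|𝔪_Y] = 0}`, the
condition `E[g h₁] = 0` for all `g ∈ L²_{XY}`, `h₁ ∈ E₂` is equivalent to
`E[gh|𝔪_Y] = E[g|𝔪_Y] E[h|𝔪_Y]` a.s. for all `g ∈ L²_{XY}`, `h ∈ L²_{YZ}`. -/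
theorem daudin_semifinal
    {Ω : Type*} {𝓐 : MeasurableSpace Ω} {P : Measure Ω} [IsProbabilityMeasure P]
    (mXY mYZ mY : MeasurableSpace Ω)
    (hXY : mXY ≤ 𝓐) (hYZ : mYZ ≤ 𝓐)
    (hYXY : mY ≤ mXY) (hYYZ : mY ≤ mYZ) :
    ((∀ g : Ω → ℝ, MemLp g 2 P → Measurable[mXY] g →
        ∀ h₁ : Ω → ℝ, MemLp h₁ 2 P → Measurable[mYZ] h₁ → P[h₁|mY] =ᵐ[P] 0 →
          ∫ ω, g ω * h₁ ω ∂P = 0) ↔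
      (∀ g : Ω → ℝ, MemLp g 2 P → Measurable[mXY] g →
        ∀ h : Ω → ℝ, MemLp h 2 P → Measurable[mYZ] h →
          P[fun ω => g ω * h ω|mY] =ᵐ[P] fun ω => (P[g|mY]) ω * (P[h|mY]) ω)) :=
  daudin_core mXY mYZ mY hXY hYZ hYXY hYYZ
end

section
/- Let (Ω, 𝓐, P) be a probability space with sub-σ-algebras 𝔪_X, 𝔪_{XY}, 𝔪_{YZ}, 𝔪_Y as in the context, where additionally 𝔪_{XY} = 𝔪_X ⊔ 𝔪_Y (the σ-algebra generated by 𝔪_X and 𝔪_Y together). Then the following two conditions are equivalent: (i) for all g' ∈ L²_X and all h₁ ∈ E₂, E[g'·h₁] = 0; (ii) for all g ∈ L²_{XY} and all h ∈ L²_{YZ}, E[g·h | 𝔪_Y] = E[g | 𝔪_Y] · E[h | 𝔪_Y] almost surely. -/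
open MeasureTheory

section Aux

variable {Ω : Type*} {𝓐 : MeasurableSpace Ω} {P : Measure Ω}

/-- Product of two L² functions is integrable. -/
lemma daudin_integrable_mul {f g : Ω → ℝ} (hf : MemLp f 2 P) (hg : MemLp g 2 P) :
    Integrable (fun ω => f ω * g ω) P := by
  have h := hg.smul (φ := f) hf (r := 1)
    (hpqr := ⟨by simp [one_div, ENNReal.inv_two_add_inv_two]⟩)
  rw [memLp_one_iff_integrable] at h
  exact h

/-- The conditional expectation of an L² function is L². -/
lemma daudin_memℒp_condexp [IsFiniteMeasure P] {m : MeasurableSpace Ω} (hm : m ≤ 𝓐)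
    {f : Ω → ℝ} (hf : MemLp f 2 P) : MemLp (P[f|m]) 2 P := by
  letI : MeasurableSpace Ω := 𝓐
  set F := hf.toLp f with hF
  have hFf : (F : Ω → ℝ) =ᵐ[P] f := MemLp.coeFn_toLp hf
  have hae : (condExpL2 ℝ ℝ hm F : Ω → ℝ) =ᵐ[P] P[f|m] := by
    refine ae_eq_condExp_of_forall_setIntegral_eq hm (hf.integrable one_le_two)
      (fun s _ hμs => integrableOn_condExpL2_of_measure_ne_top hm hμs.ne F)
      (fun s hs hμs => ?_) (lpMeas.aestronglyMeasurable _)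
    rw [integral_condExpL2_eq hm F hs hμs.ne]
    exact setIntegral_congr_ae (hm s hs) (hFf.mono fun x hx _ => hx)
  exact (Lp.memLp _).ae_eq hae

lemma daudin_generateFrom_sup (mX mY : MeasurableSpace Ω) :
    mX ⊔ mY = MeasurableSpace.generateFrom
      {s : Set Ω | ∃ A B, MeasurableSet[mX] A ∧ MeasurableSet[mY] B ∧ s = A ∩ B} := by
  refine le_antisymm (sup_le ?_ ?_) (MeasurableSpace.generateFrom_le ?_)
  · intro s hs
    exact MeasurableSpace.measurableSet_generateFrom ⟨s, Set.univ, hs, MeasurableSet.univ,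
      (Set.inter_univ s).symm⟩
  · intro s hs
    exact MeasurableSpace.measurableSet_generateFrom ⟨Set.univ, s, MeasurableSet.univ, hs,
      (Set.univ_inter s).symm⟩
  · rintro s ⟨A, B, hA, hB, rfl⟩
    exact MeasurableSet.inter (le_sup_left (α := MeasurableSpace Ω) A hA)
      (le_sup_right (α := MeasurableSpace Ω) B hB)

lemma daudin_isPiSystem (mX mY : MeasurableSpace Ω) :
    IsPiSystem {s : Set Ω | ∃ A B, MeasurableSet[mX] A ∧ MeasurableSet[mY] B ∧ s = A ∩ B} := by
  rintro s ⟨A₁, B₁, hA₁, hB₁, rfl⟩ t ⟨A₂, B₂, hA₂, hB₂, rfl⟩ -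
  exact ⟨A₁ ∩ A₂, B₁ ∩ B₂, hA₁.inter hA₂, hB₁.inter hB₂, by
    ext ω; simp [Set.mem_inter_iff]; tauto⟩

/-- Key lemma: under hypothesis (i), `E[g·h₂|mY] = 0` for `g ∈ L²_{XY}` and `h₂ ∈ E₂`. -/
lemma daudin_key [IsProbabilityMeasure P]
    (mX mXY mYZ mY : MeasurableSpace Ω)
    (hXY : mXY ≤ 𝓐) (hYZ : mYZ ≤ 𝓐)
    (hYXY : mY ≤ mXY) (hYYZ : mY ≤ mYZ) (hXXY : mX ≤ mXY)
    (hsup : mXY = mX ⊔ mY)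
    (hi : ∀ g' : Ω → ℝ, MemLp g' 2 P → Measurable[mX] g' →
        ∀ h₁ : Ω → ℝ, MemLp h₁ 2 P → Measurable[mYZ] h₁ → P[h₁|mY] =ᵐ[P] 0 →
          ∫ ω, g' ω * h₁ ω ∂P = 0)
    {g : Ω → ℝ} (hg : MemLp g 2 P) (hgm : Measurable[mXY] g)
    {h₂ : Ω → ℝ} (hh₂ : MemLp h₂ 2 P) (hh₂m : Measurable[mYZ] h₂)
    (hz : P[h₂|mY] =ᵐ[P] 0) :
    P[fun ω => g ω * h₂ ω|mY] =ᵐ[P] 0 := by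
  letI : MeasurableSpace Ω := 𝓐
  have hY : mY ≤ 𝓐 := hYXY.trans hXY
  have h₂int : Integrable h₂ P := hh₂.integrable one_le_two
  -- Step 1: all set integrals on mXY-sets vanish.
  have step1 : ∀ S : Set Ω, MeasurableSet[mXY] S → ∫ ω in S, h₂ ω ∂P = 0 := by
    have htotal : ∫ ω, h₂ ω ∂P = 0 := by
      rw [← integral_condExp (f := h₂) hY, integral_congr_ae hz]
      simp
    intro S hS
    refine MeasurableSpace.induction_on_inter (m := mXY)
      (C := fun S _ => ∫ ω in S, h₂ ω ∂P = 0)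
      (hsup.trans (daudin_generateFrom_sup mX mY)) (daudin_isPiSystem mX mY) ?_ ?_ ?_ ?_ S hS
    · simp
    · rintro t ⟨A, B, hA, hB, rfl⟩
      have hA' : MeasurableSet[𝓐] A := hXY _ (hXXY _ hA)
      have hB' : MeasurableSet[𝓐] B := hXY _ (hYXY _ hB)
      have key := hi (A.indicator fun _ => (1 : ℝ))
        (memLp_indicator_const 2 hA' 1 (Or.inr (measure_ne_top P A)))
        (measurable_const.indicator hA)
        (B.indicator h₂) (hh₂.indicator hB')
        (hh₂m.indicator (hYYZ _ hB)) ?_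
      · rw [← key, ← integral_indicator (hA'.inter hB')]
        refine integral_congr_ae (Filter.Eventually.of_forall fun ω => ?_)
        by_cases hωA : ω ∈ A <;> by_cases hωB : ω ∈ B <;>
          simp [Set.indicator_apply, hωA, hωB, Set.mem_inter_iff]
      · refine (condExp_indicator h₂int hB).trans ?_
        filter_upwards [hz] with ω hω
        by_cases hωB : ω ∈ B <;> simp [Set.indicator_apply, hωB, hω]
    · intro t htm ht
      have htm' : MeasurableSet[𝓐] t := hXY _ htm
      have := integral_add_compl htm' h₂int
      rw [ht, zero_add, htotal] at this
      exact this
    · intro f hdisj hfm hf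
      rw [integral_iUnion (fun i => hXY _ (hfm i)) hdisj h₂int.integrableOn]
      simp [hf]
  -- Step 2: E[h₂|mXY] = 0.
  have step2 : P[h₂|mXY] =ᵐ[P] 0 := by
    refine (ae_eq_condExp_of_forall_setIntegral_eq hXY h₂int
      (fun s _ _ => integrableOn_zero)
      (fun s hs _ => by rw [step1 s hs]; simp)
      (StronglyMeasurable.aestronglyMeasurable stronglyMeasurable_const)).symm
  -- Step 3: E[g h₂|mXY] = 0.
  have step3 : P[fun ω => g ω * h₂ ω|mXY] =ᵐ[P] 0 := by
    have hgs : StronglyMeasurable[mXY] g := Measurable.stronglyMeasurable hgm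
    have hmul : Integrable (g * h₂) P := daudin_integrable_mul hg hh₂
    have := condExp_mul_of_stronglyMeasurable_left (μ := P) (m := mXY) hgs hmul h₂int
    refine Filter.EventuallyEq.trans ?_ (this.trans ?_)
    · rfl
    · filter_upwards [step2] with ω hω
      simp only [Pi.mul_apply, hω, Pi.zero_apply, mul_zero]
  -- Step 4: tower property.
  have tower := condExp_condExp_of_le (μ := P) (f := fun ω => g ω * h₂ ω) hYXY hXY
  refine (tower.symm.trans ?_)
  calc P[P[fun ω => g ω * h₂ ω|mXY]|mY] =ᵐ[P] P[(0 : Ω → ℝ)|mY] := condExp_congr_ae step3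
    _ = 0 := condExp_zero

end Aux

/-- Equation 3.9 of Daudin (1980): with `𝔪_{XY} = 𝔪_X ⊔ 𝔪_Y` and
`E₂ = {h ∈ L²_{YZ} : E[h|𝔪_Y] = 0}`, the condition `E[g' h₁] = 0` for all
`g' ∈ L²_X`, `h₁ ∈ E₂` is equivalent to `E[gh|𝔪_Y] = E[g|𝔪_Y] E[h|𝔪_Y]` a.s. for all
`g ∈ L²_{XY}`, `h ∈ L²_{YZ}`. -/
theorem daudin_final
    {Ω : Type*} {𝓐 : MeasurableSpace Ω} {P : Measure Ω} [IsProbabilityMeasure P]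
    (mX mXY mYZ mY : MeasurableSpace Ω)
    (hXY : mXY ≤ 𝓐) (hYZ : mYZ ≤ 𝓐)
    (hYXY : mY ≤ mXY) (hYYZ : mY ≤ mYZ) (hXXY : mX ≤ mXY)
    (hsup : mXY = mX ⊔ mY) :
    ((∀ g' : Ω → ℝ, MemLp g' 2 P → Measurable[mX] g' →
        ∀ h₁ : Ω → ℝ, MemLp h₁ 2 P → Measurable[mYZ] h₁ → P[h₁|mY] =ᵐ[P] 0 →
          ∫ ω, g' ω * h₁ ω ∂P = 0) ↔
      (∀ g : Ω → ℝ, MemLp g 2 P → Measurable[mXY] g →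
        ∀ h : Ω → ℝ, MemLp h 2 P → Measurable[mYZ] h →
          P[fun ω => g ω * h ω|mY] =ᵐ[P] fun ω => (P[g|mY]) ω * (P[h|mY]) ω)) := by
  letI : MeasurableSpace Ω := 𝓐
  have hY : mY ≤ 𝓐 := hYXY.trans hXY
  constructor
  · -- (i) → (ii)
    intro hi g hg hgm h hh hhm
    have hhint : Integrable h P := hh.integrable one_le_two
    have hcond : MemLp (P[h|mY]) 2 P := daudin_memℒp_condexp hY hh
    have hcondm : Measurable[mYZ] (P[h|mY]) :=
      (stronglyMeasurable_condExp (m := mY)).measurable.mono hYYZ le_rfl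
    set h₁ : Ω → ℝ := fun ω => h ω - (P[h|mY]) ω with hh₁def
    have hh₁ : MemLp h₁ 2 P := hh.sub hcond
    have hh₁m : Measurable[mYZ] h₁ := hhm.sub hcondm
    have hfix : P[P[h|mY]|mY] = P[h|mY] :=
      condExp_of_stronglyMeasurable hY stronglyMeasurable_condExp integrable_condExp
    have hz : P[h₁|mY] =ᵐ[P] 0 := by
      have := condExp_sub (μ := P) (m := mY) hhint integrable_condExp
        (f := h) (g := P[h|mY])
      refine Filter.EventuallyEq.trans (by rfl) (this.trans ?_)
      rw [hfix]
      filter_upwards with ω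
      simp
    have hkey : P[fun ω => g ω * h₁ ω|mY] =ᵐ[P] 0 :=
      daudin_key mX mXY mYZ mY hXY hYZ hYXY hYYZ hXXY hsup hi hg hgm hh₁ hh₁m hz
    have hpull : P[fun ω => (P[h|mY]) ω * g ω|mY] =ᵐ[P]
        fun ω => (P[h|mY]) ω * (P[g|mY]) ω := by
      have hmul : Integrable (P[h|mY] * g) P := daudin_integrable_mul hcond hg
      have := condExp_mul_of_stronglyMeasurable_left (μ := P) (m := mY)
        (stronglyMeasurable_condExp (m := mY)) hmul (hg.integrable one_le_two)
      exact Filter.EventuallyEq.trans (by rfl) this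
    have hsplit : (fun ω => g ω * h ω) =
        fun ω => (g ω * h₁ ω) + ((P[h|mY]) ω * g ω) := by
      funext ω; simp only [hh₁def]; ring
    have hint1 : Integrable (fun ω => g ω * h₁ ω) P := daudin_integrable_mul hg hh₁
    have hint2 : Integrable (fun ω => (P[h|mY]) ω * g ω) P := daudin_integrable_mul hcond hg
    calc P[fun ω => g ω * h ω|mY]
        = P[fun ω => (g ω * h₁ ω) + ((P[h|mY]) ω * g ω)|mY] := by rw [hsplit]
      _ =ᵐ[P] P[fun ω => g ω * h₁ ω|mY] + P[fun ω => (P[h|mY]) ω * g ω|mY] :=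
          condExp_add hint1 hint2 _
      _ =ᵐ[P] fun ω => (P[g|mY]) ω * (P[h|mY]) ω := by
          filter_upwards [hkey, hpull] with ω h1 h2
          simp only [Pi.add_apply, h1, Pi.zero_apply, zero_add, h2]
          ring
  · -- (ii) → (i)
    intro hii g' hg' hg'm h₁ hh₁ hh₁m hz
    have hint : Integrable (fun ω => g' ω * h₁ ω) P := daudin_integrable_mul hg' hh₁
    have hcond : P[fun ω => g' ω * h₁ ω|mY] =ᵐ[P] 0 := by
      have := hii g' hg' (hg'm.mono hXXY le_rfl) h₁ hh₁ hh₁m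
      filter_upwards [this, hz] with ω h1 h2
      simp [h1, h2]
    rw [← integral_condExp (f := fun ω => g' ω * h₁ ω) hY, integral_congr_ae hcond]
    simp
end

section
/- Let N ≥ 2, let K be a real symmetric positive semidefinite N×N matrix, let λ > 0, and set A = K(K + λI)⁻¹. Let H be a real Hilbert space and z₁, …, z_N ∈ H. Define the full-sample kernel ridge predictions f_i = Σ_{j=1}^N A_{ij} z_j, and for each i define the leave-one-out prediction g_i = Σ_{j≠i} c^{(i)}_j z_j, where c^{(i)} is the row vector (K_{i,j})_{j≠i} (K^{(-i)} + λI)⁻¹ and K^{(-i)} is the (N−1)×(N−1) submatrix of K obtained by deleting row and column i. Then for every i one has A_{ii} < 1 and Σ_{i=1}^N ‖z_i − g_i‖² = Σ_{i=1}^N ‖z_i − f_i‖² / (1 − A_{ii})². -/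
open Matrix BigOperators

/-- Leave-one-out identity for kernel ridge regression with Hilbert-space-valued
targets (Theorem: LOO for kernel mean embeddings): with `A = K(K+λI)⁻¹`, full-sample
predictions `f i = ∑ j, A i j • z j` and leave-one-out predictions
`g i = ∑_{j ≠ i} c^{(i)}_j • z j` where `c^{(i)} = (K_{i,·})_{≠ i} (K^{(-i)} + λI)⁻¹`,
one has `A i i < 1` and `∑ i, ‖z i - g i‖² = ∑ i, ‖z i - f i‖² / (1 - A i i)²`. -/
theorem loo_kernel_ridge_sum
    {n : ℕ} (K : Matrix (Fin (n + 2)) (Fin (n + 2)) ℝ)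
    (hKsymm : K.IsSymm) (hKpsd : K.PosSemidef)
    (lam : ℝ) (hlam : 0 < lam)
    {H : Type*} [NormedAddCommGroup H] [InnerProductSpace ℝ H] [CompleteSpace H]
    (z : Fin (n + 2) → H)
    (A : Matrix (Fin (n + 2)) (Fin (n + 2)) ℝ)
    (hA : A = K * (K + lam • (1 : Matrix (Fin (n + 2)) (Fin (n + 2)) ℝ))⁻¹)
    (f : Fin (n + 2) → H) (hf : ∀ i, f i = ∑ j, A i j • z j)
    (g : Fin (n + 2) → H)
    (hg : ∀ i : Fin (n + 2), g i = ∑ j : Fin (n + 1),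
      (∑ l : Fin (n + 1), K i (i.succAbove l) *
        ((K.submatrix i.succAbove i.succAbove
          + lam • (1 : Matrix (Fin (n + 1)) (Fin (n + 1)) ℝ))⁻¹ l j)) • z (i.succAbove j)) :
    (∀ i, A i i < 1) ∧
      ∑ i, ‖z i - g i‖ ^ 2 = ∑ i, ‖z i - f i‖ ^ 2 / (1 - A i i) ^ 2 := by
  classical
  set B : Matrix (Fin (n + 2)) (Fin (n + 2)) ℝ := K + lam • 1 with hBdef
  have h1pd : (lam • (1 : Matrix (Fin (n + 2)) (Fin (n + 2)) ℝ)).PosDef := by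
    rw [Matrix.smul_one_eq_diagonal]
    exact Matrix.PosDef.diagonal fun _ => hlam
  have hBpd : B.PosDef := Matrix.PosDef.posSemidef_add hKpsd h1pd
  have hBunit : IsUnit B.det := (Matrix.isUnit_iff_isUnit_det B).mp hBpd.isUnit
  have hBinvmul : B⁻¹ * B = 1 := Matrix.nonsing_inv_mul B hBunit
  have hBmulinv : B * B⁻¹ = 1 := Matrix.mul_nonsing_inv B hBunit
  have hAeq : A = 1 - lam • B⁻¹ := by
    have hK : K = B - lam • 1 := by rw [hBdef, add_sub_cancel_right]
    rw [hA, hK, Matrix.sub_mul, hBmulinv, Matrix.smul_mul, Matrix.one_mul]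
  have hBinvpd : (B⁻¹).PosDef := hBpd.inv
  have hdiag : ∀ i, 0 < B⁻¹ i i := by
    intro i
    have hx : (Pi.single i 1 : Fin (n + 2) → ℝ) ≠ 0 := by
      intro h
      simpa using congrFun h i
    have := hBinvpd.dotProduct_mulVec_pos hx
    simpa [dotProduct, Matrix.mulVec, Pi.single_apply, mul_comm] using this
  have hAii : ∀ i, A i i = 1 - lam * B⁻¹ i i := by
    intro i
    simp [hAeq, Matrix.one_apply, Matrix.sub_apply]
  -- key pointwise identity
  have key : ∀ i, z i - f i = (lam * B⁻¹ i i) • (z i - g i) := by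
    intro i
    set Bi : Matrix (Fin (n + 1)) (Fin (n + 1)) ℝ :=
      K.submatrix i.succAbove i.succAbove + lam • 1 with hBidef
    have h1pd' : (lam • (1 : Matrix (Fin (n + 1)) (Fin (n + 1)) ℝ)).PosDef := by
      rw [Matrix.smul_one_eq_diagonal]
      exact Matrix.PosDef.diagonal fun _ => hlam
    have hBipd : Bi.PosDef := Matrix.PosDef.posSemidef_add (hKpsd.submatrix i.succAbove) h1pd'
    have hBiunit : IsUnit Bi.det := (Matrix.isUnit_iff_isUnit_det Bi).mp hBipd.isUnit
    have hBiinv : Bi * Bi⁻¹ = 1 := Matrix.mul_nonsing_inv Bi hBiunit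
    set c : Fin (n + 1) → ℝ := fun j => ∑ l, K i (i.succAbove l) * Bi⁻¹ l j with hcdef
    set v : Fin (n + 1) → ℝ := fun j => B⁻¹ i (i.succAbove j) with hvdef
    set w : Fin (n + 1) → ℝ := fun k => -(B⁻¹ i i) * K i (i.succAbove k) with hwdef
    have hrow : ∀ k, ∑ j, B⁻¹ i j * B j k = if i = k then 1 else 0 := by
      intro k
      have := Matrix.ext_iff.mpr hBinvmul i k
      rwa [Matrix.mul_apply, Matrix.one_apply] at this
    have hBientry : ∀ j k, Bi j k = B (i.succAbove j) (i.succAbove k) := by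
      intro j k
      by_cases h : j = k
      · subst h
        simp [hBidef, hBdef, Matrix.one_apply, Matrix.submatrix_apply]
      · have h2 : i.succAbove j ≠ i.succAbove k := fun hc => h (i.succAbove_right_injective hc)
        simp [hBidef, hBdef, Matrix.one_apply, h, h2, Matrix.submatrix_apply]
    have hvB : v ᵥ* Bi = w := by
      funext k
      have hsplit := Fin.sum_univ_succAbove (fun m => B⁻¹ i m * B m (i.succAbove k)) i
      have hne : i ≠ i.succAbove k := (i.succAbove_ne k).symm
      have hBik : B i (i.succAbove k) = K i (i.succAbove k) := by
        simp [hBdef, Matrix.one_apply, hne]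
      have h0 : ∑ m, B⁻¹ i m * B m (i.succAbove k) = 0 := by
        rw [hrow]; simp [hne]
      have : B⁻¹ i i * B i (i.succAbove k)
          + ∑ j, B⁻¹ i (i.succAbove j) * B (i.succAbove j) (i.succAbove k) = 0 := by
        rw [← hsplit, h0]
      simp only [Matrix.vecMul, dotProduct, hwdef, hvdef]
      calc ∑ j, B⁻¹ i (i.succAbove j) * Bi j k
          = ∑ j, B⁻¹ i (i.succAbove j) * B (i.succAbove j) (i.succAbove k) := by
            refine Finset.sum_congr rfl fun j _ => by rw [hBientry]
        _ = -(B⁻¹ i i) * K i (i.succAbove k) := by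
            rw [← hBik]; linarith [this]
    have hv : v = w ᵥ* Bi⁻¹ := by
      have := congrArg (fun u => u ᵥ* Bi⁻¹) hvB
      simpa [Matrix.vecMul_vecMul, hBiinv] using this
    have hkey : ∀ j, B⁻¹ i (i.succAbove j) = -(B⁻¹ i i) * c j := by
      intro j
      have := congrFun hv j
      simp only [hvdef] at this
      rw [this]
      simp only [Matrix.vecMul, dotProduct, hwdef, hcdef]
      rw [Finset.mul_sum]
      refine Finset.sum_congr rfl fun l _ => by ring
    -- now the Hilbert space computation
    have hfi : z i - f i = lam • ∑ j, B⁻¹ i j • z j := by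
      rw [hf i]
      have : ∀ j, A i j • z j = (if i = j then (1 : ℝ) else 0) • z j - (lam * B⁻¹ i j) • z j := by
        intro j
        rw [hAeq]
        simp [Matrix.sub_apply, Matrix.one_apply, sub_smul]
      rw [Finset.sum_congr rfl fun j _ => this j, Finset.sum_sub_distrib]
      simp [Finset.smul_sum, smul_smul, sub_sub_cancel_left]
    have hsum : ∑ j, B⁻¹ i j • z j = B⁻¹ i i • (z i - g i) := by
      have hgsum : g i = ∑ j : Fin (n + 1), c j • z (i.succAbove j) := hg i
      rw [Fin.sum_univ_succAbove (fun j => B⁻¹ i j • z j) i, hgsum]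
      have : ∀ j : Fin (n + 1), B⁻¹ i (i.succAbove j) • z (i.succAbove j)
          = -(B⁻¹ i i) • (c j • z (i.succAbove j)) := by
        intro j
        rw [hkey j, smul_smul]
      rw [Finset.sum_congr rfl fun j _ => this j, ← Finset.smul_sum]
      module
    rw [hfi, hsum, smul_smul]
  have hpos : ∀ i, 0 < 1 - A i i := by
    intro i
    rw [hAii i]
    have := mul_pos hlam (hdiag i)
    linarith
  constructor
  · intro i
    linarith [hpos i]
  · refine Finset.sum_congr rfl fun i _ => ?_
    have ht : 1 - A i i = lam * B⁻¹ i i := by rw [hAii i]; ring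
    have hnorm : ‖z i - f i‖ = (lam * B⁻¹ i i) * ‖z i - g i‖ := by
      rw [key i, norm_smul, Real.norm_eq_abs, abs_of_pos (by rw [← ht]; exact hpos i)]
    have h0 : (1 - A i i) ≠ 0 := ne_of_gt (hpos i)
    rw [hnorm, ← ht, mul_pow, mul_comm ((1 - A i i) ^ 2), mul_div_assoc,
      div_self (pow_ne_zero 2 h0), mul_one]
end

section
/- Let N ≥ 2, let K be a real symmetric positive semidefinite N×N matrix, let λ > 0, and set A = K(K + λI)⁻¹. Let H be a real Hilbert space and z₁, …, z_N ∈ H. Define f_i = Σ_{j=1}^N A_{ij} z_j and the leave-one-out prediction g_i = Σ_{j≠i} c^{(i)}_j z_j, where c^{(i)} is the row vector (K_{i,j})_{j≠i} (K^{(-i)} + λI)⁻¹ and K^{(-i)} is the (N−1)×(N−1) submatrix of K obtained by deleting row and column i. Then for every i, A_{ii} ≠ 1 and g_i = (f_i − A_{ii} z_i)/(1 − A_{ii}); equivalently, z_i − g_i = (z_i − f_i)/(1 − A_{ii}). -/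
open Matrix BigOperators

/-- Pointwise leave-one-out identity for kernel ridge regression with
Hilbert-space-valued targets: with `A = K(K+λI)⁻¹`, full-sample predictions
`f i = ∑ j, A i j • z j` and leave-one-out predictions
`g i = ∑_{j ≠ i} c^{(i)}_j • z j` where `c^{(i)} = (K_{i,·})_{≠ i} (K^{(-i)} + λI)⁻¹`,
one has `A i i ≠ 1`, `g i = (f i - A i i • z i)/(1 - A i i)` and
`z i - g i = (z i - f i)/(1 - A i i)`. -/
theorem loo_kernel_ridge_pointwise
    {n : ℕ} (K : Matrix (Fin (n + 2)) (Fin (n + 2)) ℝ)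
    (hKsymm : K.IsSymm) (hKpsd : K.PosSemidef)
    (lam : ℝ) (hlam : 0 < lam)
    {H : Type*} [NormedAddCommGroup H] [InnerProductSpace ℝ H] [CompleteSpace H]
    (z : Fin (n + 2) → H)
    (A : Matrix (Fin (n + 2)) (Fin (n + 2)) ℝ)
    (hA : A = K * (K + lam • (1 : Matrix (Fin (n + 2)) (Fin (n + 2)) ℝ))⁻¹)
    (f : Fin (n + 2) → H) (hf : ∀ i, f i = ∑ j, A i j • z j)
    (g : Fin (n + 2) → H)
    (hg : ∀ i : Fin (n + 2), g i = ∑ j : Fin (n + 1),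
      (∑ l : Fin (n + 1), K i (i.succAbove l) *
        ((K.submatrix i.succAbove i.succAbove
          + lam • (1 : Matrix (Fin (n + 1)) (Fin (n + 1)) ℝ))⁻¹ l j)) • z (i.succAbove j)) :
    ∀ i : Fin (n + 2), A i i ≠ 1 ∧
      g i = (1 - A i i)⁻¹ • (f i - A i i • z i) ∧
      z i - g i = (1 - A i i)⁻¹ • (z i - f i) := by
  intro i
  set B := K + lam • (1 : Matrix (Fin (n + 2)) (Fin (n + 2)) ℝ) with hBdef
  have hlam1 : (lam • (1 : Matrix (Fin (n + 2)) (Fin (n + 2)) ℝ)).PosDef := by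
    rw [smul_one_eq_diagonal]
    exact posDef_diagonal_iff.mpr fun _ => hlam
  have hBpd : B.PosDef := Matrix.PosDef.posSemidef_add hKpsd hlam1
  have hBdet : IsUnit B.det := isUnit_iff_ne_zero.mpr hBpd.det_pos.ne'
  have hBinvpd : B⁻¹.PosDef := hBpd.inv
  -- A = 1 - lam • B⁻¹
  have hAeq : A = 1 - lam • B⁻¹ := by
    have : K = B - lam • 1 := by rw [hBdef]; abel
    rw [hA, this, Matrix.sub_mul, Matrix.smul_mul, Matrix.one_mul,
      Matrix.mul_nonsing_inv _ hBdet]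
  set v : Fin (n + 2) → ℝ := fun j => B⁻¹ i j with hvdef
  have hvi : 0 < v i := by
    have h := hBinvpd.dotProduct_mulVec_pos (x := Pi.single i 1) (by
      intro h
      have := congrFun h i
      simp at this)
    simpa [dotProduct, mulVec, Pi.single_apply, Finset.mul_sum, mul_comm] using h
  have hAapp : ∀ j, A i j = (if i = j then (1:ℝ) else 0) - lam * v j := by
    intro j
    rw [hAeq]
    simp [Matrix.sub_apply, Matrix.one_apply, hvdef]
  have hAii : A i i = 1 - lam * v i := by simpa using hAapp i

  set σ := i.succAbove with hσ
  have hσne : ∀ j, σ j ≠ i := fun j => i.succAbove_ne j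
  have hσinj : Function.Injective σ := Fin.succAbove_right_injective
  set B' := K.submatrix σ σ + lam • (1 : Matrix (Fin (n + 1)) (Fin (n + 1)) ℝ) with hB'def
  have hB'sub : ∀ l j, B (σ l) (σ j) = B' l j := by
    intro l j
    simp [hBdef, hB'def, Matrix.add_apply, Matrix.smul_apply, Matrix.one_apply,
      Matrix.submatrix_apply, hσinj.eq_iff]
  have hlam1' : (lam • (1 : Matrix (Fin (n + 1)) (Fin (n + 1)) ℝ)).PosDef := by
    rw [smul_one_eq_diagonal]
    exact posDef_diagonal_iff.mpr fun _ => hlam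
  have hB'pd : B'.PosDef := Matrix.PosDef.posSemidef_add (hKpsd.submatrix σ) hlam1'
  have hB'det : IsUnit B'.det := isUnit_iff_ne_zero.mpr hB'pd.det_pos.ne'
  -- row equation for B⁻¹ * B = 1
  have hrow : ∀ j, ∑ k, v k * B k j = if i = j then (1:ℝ) else 0 := by
    intro j
    have h1 := Matrix.nonsing_inv_mul B hBdet
    have h2 := congrFun (congrFun h1 i) j
    simpa [Matrix.mul_apply, Matrix.one_apply, hvdef] using h2
  set w : Fin (n + 1) → ℝ := fun l => v (σ l) with hwdef
  set b : Fin (n + 1) → ℝ := fun j => K i (σ j) with hbdef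
  have hBi : ∀ j, B i (σ j) = K i (σ j) := by
    intro j
    simp [hBdef, Matrix.add_apply, Matrix.smul_apply, Matrix.one_apply, (hσne j).symm]
  have hwB' : w ᵥ* B' = (-(v i)) • b := by
    funext j
    have h0 := hrow (σ j)
    rw [Fin.sum_univ_succAbove _ i, if_neg (fun h => hσne j h.symm)] at h0
    have : (w ᵥ* B') j = ∑ l, w l * B' l j := by
      simp [Matrix.vecMul, dotProduct]
    rw [this]
    simp only [hwdef, Pi.smul_apply, smul_eq_mul, hbdef]
    have hrw : ∀ l, v (σ l) * B' l j = v (σ l) * B (σ l) (σ j) := fun l => by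
      rw [hB'sub]
    rw [Finset.sum_congr rfl (fun l _ => hrw l)]
    rw [hBi j] at h0
    linarith
  have hw : w = (-(v i)) • (b ᵥ* B'⁻¹) := by
    calc w = (w ᵥ* B') ᵥ* B'⁻¹ := by
            rw [Matrix.vecMul_vecMul, Matrix.mul_nonsing_inv _ hB'det, Matrix.vecMul_one]
      _ = (-(v i)) • (b ᵥ* B'⁻¹) := by rw [hwB', Matrix.smul_vecMul]
  have hc : ∀ j, (∑ l : Fin (n + 1), K i (σ l) * B'⁻¹ l j) = (-(v i)⁻¹) * v (σ j) := by
    intro j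
    have h1 : (b ᵥ* B'⁻¹) j = ∑ l, K i (σ l) * B'⁻¹ l j := by
      simp [Matrix.vecMul, dotProduct, hbdef]
    have h2 := congrFun hw j
    simp only [hwdef, Pi.smul_apply, smul_eq_mul] at h2
    rw [← h1, h2]
    field_simp
  set S : H := ∑ j : Fin (n + 1), v (σ j) • z (σ j) with hSdef
  have hgS : g i = (-(v i)⁻¹) • S := by
    rw [hg i, hSdef, Finset.smul_sum]
    refine Finset.sum_congr rfl fun j _ => ?_
    rw [show K.submatrix σ σ + lam • (1 : Matrix (Fin (n + 1)) (Fin (n + 1)) ℝ) = B' from rfl]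
    rw [hc j, smul_smul]
  have hfS : f i = z i - (lam * v i) • z i - lam • S := by
    rw [hf i, Fin.sum_univ_succAbove _ i]
    have hterm : ∀ l : Fin (n + 1), A i (σ l) • z (σ l) = -(lam • (v (σ l) • z (σ l))) := by
      intro l
      rw [hAapp, if_neg (fun h => hσne l h.symm), smul_smul]
      simp
    rw [Finset.sum_congr rfl (fun l _ => hterm l), Finset.sum_neg_distrib]
    rw [hAii, hSdef, Finset.smul_sum]
    rw [sub_smul, one_smul]
    abel
  have hlamvi : (0:ℝ) < lam * v i := mul_pos hlam hvi
  have hAne : A i i ≠ 1 := by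
    rw [hAii]
    intro h
    have : lam * v i = 0 := by linarith
    exact hlamvi.ne' this
  have h1A : 1 - A i i = lam * v i := by rw [hAii]; ring
  refine ⟨hAne, ?_, ?_⟩
  · rw [hgS, hfS, h1A, hAii]
    match_scalars <;> field_simp <;> ring
  · rw [hgS, hfS, h1A]
    match_scalars <;> field_simp <;> ring
end

section
/- Let (W, 𝓦, μ) be a probability space, let B ≥ 2, and let k_x, k_t : W × W → ℝ be measurable symmetric functions with |k_x| ≤ K_x and |k_t| ≤ K_t for constants K_x, K_t > 0. Let w = (w₁, …, w_B) be distributed according to the B-fold product measure μ^{⊗B}, and define T(w) = (1/(B(B−1))) Σ_{j=1}^B Σ_{l=1}^B k_x(w_j, w_l) k_t(w_j, w_l). Then for every ε > 0, P( |T(w) − E[T]| ≥ ε ) ≤ 2 exp( − 2 ε² B (B−1)² / ((4B − 2)² K_x² K_t²) ). -/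
open MeasureTheory BigOperators

open Real ProbabilityTheory in
private lemma integrable_of_bdd {α : Type*} [MeasurableSpace α] {μ : Measure α}
    [IsFiniteMeasure μ] {g : α → ℝ} (hg : Measurable g) {C : ℝ} (hb : ∀ x, |g x| ≤ C) :
    Integrable g μ :=
  Integrable.mono' (integrable_const C) hg.aestronglyMeasurable
    (Filter.Eventually.of_forall fun x => by rw [Real.norm_eq_abs]; exact hb x)


open Real ProbabilityTheory in
private lemma hoeffding_core {p : ℝ} (hp0 : 0 ≤ p) (hp1 : p ≤ 1) (u : ℝ) :
    1 - p + p * Real.exp u ≤ Real.exp (p * u + u ^ 2 / 8) := by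
  set D : ℝ → ℝ := fun u => 1 - p + p * Real.exp u with hD
  have hDpos : ∀ u, 0 < D u := by
    intro u
    rcases eq_or_lt_of_le hp1 with h | h
    · simp [hD, ← h]; positivity
    · have : 0 < 1 - p := by linarith
      have : 0 ≤ p * Real.exp u := by positivity
      simp only [hD]; linarith
  -- g u := p*u + u^2/8 - log (D u); show 0 ≤ g u
  set g : ℝ → ℝ := fun u => p * u + u ^ 2 / 8 - Real.log (D u) with hg
  set g1 : ℝ → ℝ := fun u => p + u / 4 - p * Real.exp u / D u with hg1
  have hDD : ∀ u, HasDerivAt D (p * Real.exp u) u := fun u =>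
    ((Real.hasDerivAt_exp u).const_mul p).const_add (1 - p)
  have hgD : ∀ u, HasDerivAt g (g1 u) u := by
    intro u
    have h1 : HasDerivAt (fun u : ℝ => p * u) p u := (hasDerivAt_id u).const_mul p |>.congr_deriv (by ring)
    have h2 : HasDerivAt (fun u : ℝ => u ^ 2 / 8) (u / 4) u := by
      simpa using (hasDerivAt_pow 2 u).div_const 8 |>.congr_deriv (by ring)
    have h3 : HasDerivAt (fun u => Real.log (D u)) (p * Real.exp u / D u) u :=
      (hDD u).log (hDpos u).ne'
    exact (h1.add h2).sub h3
  have hg1D : ∀ u, HasDerivAt g1 (1 / 4 - p * (1 - p) * Real.exp u / (D u) ^ 2) u := by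
    intro u
    have h2 : HasDerivAt (fun u : ℝ => p + u / 4) (1 / 4) u := by
      simpa using ((hasDerivAt_id u).div_const 4).const_add p
    have h3 : HasDerivAt (fun u => p * Real.exp u / D u)
        ((p * Real.exp u * D u - p * Real.exp u * (p * Real.exp u)) / (D u) ^ 2) u :=
      ((Real.hasDerivAt_exp u).const_mul p).div (hDD u) (hDpos u).ne'
    have : (p * Real.exp u * D u - p * Real.exp u * (p * Real.exp u)) / (D u) ^ 2
        = p * (1 - p) * Real.exp u / (D u) ^ 2 := by
      rw [hD]; ring_nf
    rw [this] at h3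
    exact h2.sub h3
  have hg1nonneg : ∀ u, 0 ≤ 1 / 4 - p * (1 - p) * Real.exp u / (D u) ^ 2 := by
    intro u
    have hD2 : (0:ℝ) < (D u) ^ 2 := pow_pos (hDpos u) 2
    rw [sub_nonneg, div_le_iff₀ hD2]
    have key : 0 ≤ ((1 - p) - p * Real.exp u) ^ 2 := sq_nonneg _
    have : (D u) ^ 2 = ((1 - p) + p * Real.exp u) ^ 2 := by rw [hD]
    nlinarith [Real.exp_pos u]
  have hg1mono : Monotone g1 :=
    monotone_of_deriv_nonneg (fun u => (hg1D u).differentiableAt)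
      (fun u => by rw [(hg1D u).deriv]; exact hg1nonneg u)
  have hg1zero : g1 0 = 0 := by simp [hg1, hD]
  have hgdiff : Differentiable ℝ g := fun u => (hgD u).differentiableAt
  have hg0 : g 0 = 0 := by simp [hg, hD]
  have hgnonneg : 0 ≤ g u := by
    rcases le_total 0 u with h | h
    · have : MonotoneOn g (Set.Ici 0) := by
        apply monotoneOn_of_deriv_nonneg (convex_Ici 0) hgdiff.continuous.continuousOn
          (fun x _ => (hgdiff x).differentiableWithinAt)
        intro x hx
        rw [(hgD x).deriv]
        rw [← hg1zero]
        exact hg1mono (le_of_lt (by simpa using hx))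
      have := this (Set.self_mem_Ici) (by exact h) h
      linarith [hg0 ▸ this]
    · have : AntitoneOn g (Set.Iic 0) := by
        apply antitoneOn_of_deriv_nonpos (convex_Iic 0) hgdiff.continuous.continuousOn
          (fun x _ => (hgdiff x).differentiableWithinAt)
        intro x hx
        rw [(hgD x).deriv, ← hg1zero]
        exact hg1mono (le_of_lt (by simpa using hx))
      have := this (by exact h : u ∈ Set.Iic 0) Set.self_mem_Iic h
      linarith [hg0 ▸ this]
  have : Real.log (D u) ≤ p * u + u ^ 2 / 8 := by simp only [hg] at hgnonneg; linarith
  calc D u = Real.exp (Real.log (D u)) := (Real.exp_log (hDpos u)).symm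
    _ ≤ Real.exp (p * u + u ^ 2 / 8) := Real.exp_le_exp.2 this

open Real ProbabilityTheory in
private lemma hoeffding_lemma {W : Type*} [MeasurableSpace W] (μ : Measure W)
    [IsProbabilityMeasure μ] {X : W → ℝ} (hX : Measurable X) {a b : ℝ}
    (hrange : ∀ ω, X ω ∈ Set.Icc a b) (hmean : ∫ ω, X ω ∂μ = 0) (t : ℝ) :
    ∫ ω, Real.exp (t * X ω) ∂μ ≤ Real.exp (t ^ 2 * (b - a) ^ 2 / 8) := by
  have hW : Nonempty W := by
    by_contra h
    rw [not_nonempty_iff] at h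
    have : (μ Set.univ) = 0 := by simp [Set.eq_empty_of_isEmpty (Set.univ : Set W)]
    simp [measure_univ] at this
  obtain ⟨ω₀⟩ := hW
  have hab : a ≤ b := le_trans (hrange ω₀).1 (hrange ω₀).2
  have hXint : Integrable X μ :=
    integrable_of_bdd hX (C := max |a| |b|) (fun ω => abs_le.2
      ⟨le_trans (neg_le_neg (le_max_left |a| |b|)) (le_trans (neg_abs_le a) (hrange ω).1),
       le_trans (hrange ω).2 (le_trans (le_abs_self b) (le_max_right |a| |b|))⟩)
  have ha0 : a ≤ 0 := by
    have : a ≤ ∫ ω, X ω ∂μ := by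
      calc a = ∫ _, a ∂μ := by simp
        _ ≤ ∫ ω, X ω ∂μ := integral_mono (integrable_const a) hXint fun ω => (hrange ω).1
    linarith [hmean ▸ this]
  have hb0 : 0 ≤ b := by
    have : (∫ ω, X ω ∂μ) ≤ b := by
      calc (∫ ω, X ω ∂μ) ≤ ∫ _, b ∂μ := integral_mono hXint (integrable_const b)
            fun ω => (hrange ω).2
        _ = b := by simp
    linarith [hmean ▸ this]
  rcases eq_or_lt_of_le hab with heq | hlt
  · -- a = b forces a = 0 = b, X = 0
    have ha : a = 0 := le_antisymm ha0 (heq ▸ hb0)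
    have hXz : ∀ ω, X ω = 0 := fun ω =>
      le_antisymm ((ha ▸ heq ▸ (hrange ω).2)) (ha ▸ (hrange ω).1)
    simp only [hXz, mul_zero, Real.exp_zero]
    rw [integral_const]; simp
    positivity
  · -- convexity bound pointwise
    have hba : 0 < b - a := sub_pos.2 hlt
    have hpt : ∀ ω, Real.exp (t * X ω) ≤
        ((b - X ω) * Real.exp (t * a) + (X ω - a) * Real.exp (t * b)) / (b - a) := by
      intro ω
      obtain ⟨h1, h2⟩ := hrange ω
      have hs : 0 ≤ (b - X ω) / (b - a) := div_nonneg (by linarith) hba.le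
      have hr : 0 ≤ (X ω - a) / (b - a) := div_nonneg (by linarith) hba.le
      have hsum : (b - X ω) / (b - a) + (X ω - a) / (b - a) = 1 := by
        field_simp
        ring
      have hconv := convexOn_exp.2 (Set.mem_univ (t * a)) (Set.mem_univ (t * b)) hs hr hsum
      have harg : ((b - X ω) / (b - a)) • (t * a) + ((X ω - a) / (b - a)) • (t * b) = t * X ω := by
        simp only [smul_eq_mul]; field_simp; ring
      rw [harg] at hconv
      calc Real.exp (t * X ω) ≤ (b - X ω) / (b - a) * Real.exp (t * a)
            + (X ω - a) / (b - a) * Real.exp (t * b) := by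
            simpa [smul_eq_mul] using hconv
        _ = ((b - X ω) * Real.exp (t * a) + (X ω - a) * Real.exp (t * b)) / (b - a) := by
            ring
    have hint1 : Integrable (fun ω => Real.exp (t * X ω)) μ := by
      apply integrable_of_bdd (by fun_prop) (C := Real.exp (|t| * max |a| |b|))
      intro ω
      rw [abs_of_pos (Real.exp_pos _), Real.exp_le_exp]
      calc t * X ω ≤ |t * X ω| := le_abs_self _
        _ = |t| * |X ω| := abs_mul t _
        _ ≤ |t| * max |a| |b| := by
            apply mul_le_mul_of_nonneg_left _ (abs_nonneg t)
            exact abs_le.2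
              ⟨le_trans (neg_le_neg (le_max_left |a| |b|)) (le_trans (neg_abs_le a) (hrange ω).1),
               le_trans (hrange ω).2 (le_trans (le_abs_self b) (le_max_right |a| |b|))⟩
    have hint2 : Integrable (fun ω =>
        ((b - X ω) * Real.exp (t * a) + (X ω - a) * Real.exp (t * b)) / (b - a)) μ := by
      apply Integrable.div_const
      exact (((integrable_const b).sub hXint).mul_const _).add
        ((hXint.sub (integrable_const a)).mul_const _)
    have step1 : ∫ ω, Real.exp (t * X ω) ∂μ ≤
        (b * Real.exp (t * a) - a * Real.exp (t * b)) / (b - a) := by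
      calc ∫ ω, Real.exp (t * X ω) ∂μ
          ≤ ∫ ω, ((b - X ω) * Real.exp (t * a) + (X ω - a) * Real.exp (t * b)) / (b - a) ∂μ :=
            integral_mono hint1 hint2 hpt
        _ = (b * Real.exp (t * a) - a * Real.exp (t * b)) / (b - a) := by
            rw [integral_div]
            congr 1
            rw [show (fun ω => (b - X ω) * Real.exp (t * a) + (X ω - a) * Real.exp (t * b))
                = fun ω => (b * Real.exp (t * a) - a * Real.exp (t * b))
                  + X ω * (Real.exp (t * b) - Real.exp (t * a)) from funext fun ω => by ring,
              integral_add (integrable_const _) (hXint.mul_const _), integral_const,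
              integral_mul_const, hmean]
            simp
    -- now apply hoeffding_core with p = -a/(b-a), u = t*(b-a)
    set p := -a / (b - a) with hp
    have hp0 : 0 ≤ p := div_nonneg (by linarith) hba.le
    have hp1 : p ≤ 1 := by
      rw [hp, div_le_one hba]; linarith
    have key := hoeffding_core hp0 hp1 (t * (b - a))
    have heq2 : (b * Real.exp (t * a) - a * Real.exp (t * b)) / (b - a)
        = Real.exp (t * a) * (1 - p + p * Real.exp (t * (b - a))) := by
      rw [hp]
      rw [show t * b = t * a + t * (b - a) by ring, Real.exp_add]
      field_simp
      ring
    have heq3 : Real.exp (t * a) * Real.exp (p * (t * (b - a)) + (t * (b - a)) ^ 2 / 8)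
        = Real.exp (t ^ 2 * (b - a) ^ 2 / 8) := by
      rw [← Real.exp_add]
      congr 1
      rw [hp]
      field_simp
      ring
    calc ∫ ω, Real.exp (t * X ω) ∂μ
        ≤ (b * Real.exp (t * a) - a * Real.exp (t * b)) / (b - a) := step1
      _ = Real.exp (t * a) * (1 - p + p * Real.exp (t * (b - a))) := heq2
      _ ≤ Real.exp (t * a) * Real.exp (p * (t * (b - a)) + (t * (b - a)) ^ 2 / 8) := by
          exact mul_le_mul_of_nonneg_left key (Real.exp_pos _).le
      _ = Real.exp (t ^ 2 * (b - a) ^ 2 / 8) := heq3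

open Real ProbabilityTheory in
private lemma mcdiarmid_mgf {W : Type*} [MeasurableSpace W] (μ : Measure W)
    [IsProbabilityMeasure μ] {c M : ℝ} (hc : 0 ≤ c) (t : ℝ) :
    ∀ (n : ℕ) (f : (Fin n → W) → ℝ), Measurable f → (∀ w, |f w| ≤ M) →
    (∀ (i : Fin n) (w : Fin n → W) (x x' : W),
      |f (Function.update w i x) - f (Function.update w i x')| ≤ c) →
    ∫ w, Real.exp (t * (f w - ∫ v, f v ∂(Measure.pi fun _ : Fin n => μ)))
        ∂(Measure.pi fun _ : Fin n => μ)
      ≤ Real.exp (n * (t ^ 2 * c ^ 2 / 8)) := by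
  intro n
  induction n with
  | zero =>
    intro f hf hbdd hdiff
    have h0 : ∀ w : Fin 0 → W, f w = f default := fun w => congrArg f (Subsingleton.elim _ _)
    have : (∫ v, f v ∂(Measure.pi fun _ : Fin 0 => μ)) = f default := by
      rw [integral_unique]; simp
    simp only [this]
    calc ∫ w, Real.exp (t * (f w - f default)) ∂(Measure.pi fun _ : Fin 0 => μ)
        = ∫ _, (1:ℝ) ∂(Measure.pi fun _ : Fin 0 => μ) := by
          apply integral_congr_ae; filter_upwards with w; rw [h0 w]; simp
      _ ≤ Real.exp ((0:ℕ) * (t ^ 2 * c ^ 2 / 8)) := by norm_num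
  | succ n IH =>
    intro f hf hbdd hdiff
    set πn : Measure (Fin n → W) := Measure.pi fun _ : Fin n => μ with hπn
    set πN : Measure (Fin (n+1) → W) := Measure.pi fun _ : Fin (n+1) => μ with hπN
    set e := MeasurableEquiv.piFinSuccAbove (fun _ : Fin (n+1) => W) 0 with he
    have hMP : MeasurePreserving e.symm (μ.prod πn) πN :=
      (measurePreserving_piFinSuccAbove (fun _ : Fin (n+1) => μ) 0).symm e
    have hsymm : ∀ (x : W) (v : Fin n → W), e.symm (x, v) = Fin.cons x v := by
      intro x v
      rw [he, MeasurableEquiv.piFinSuccAbove_symm_apply]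
      exact Fin.insertNth_zero' x v
    set f' : W × (Fin n → W) → ℝ := fun z => f (e.symm z) with hf'
    have hf'meas : Measurable f' := hf.comp e.symm.measurable
    have hf'bdd : ∀ z, |f' z| ≤ M := fun z => hbdd _
    set F : (Fin n → W) → ℝ := fun v => ∫ x, f' (x, v) ∂μ with hF
    have hFmeas : Measurable F := by
      have := hf'meas.stronglyMeasurable.integral_prod_left' (μ := μ)
      exact this.measurable
    have hμW : Nonempty W := by
      by_contra h
      rw [not_nonempty_iff] at h
      have : (μ Set.univ) = 0 := by simp [Set.eq_empty_of_isEmpty (Set.univ : Set W)]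
      simp [measure_univ] at this
    have hint_slice : ∀ v : Fin n → W, Integrable (fun x => f' (x, v)) μ := fun v =>
      integrable_of_bdd (hf'meas.comp (measurable_id.prodMk measurable_const))
        (fun x => hf'bdd _)
    have hFbdd : ∀ v, |F v| ≤ M := by
      intro v
      rw [hF]
      have := norm_integral_le_of_norm_le (μ := μ) (f := fun x => f' (x, v))
        (integrable_const M) (Filter.Eventually.of_forall fun x => by
          rw [Real.norm_eq_abs]; exact hf'bdd _)
      simpa using this
    -- bounded differences of F
    have hFdiff : ∀ (i : Fin n) (v : Fin n → W) (x x' : W),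
        |F (Function.update v i x) - F (Function.update v i x')| ≤ c := by
      intro i v x x'
      have key : ∀ y : W, f' (y, Function.update v i x) - f' (y, Function.update v i x')
          = f (Function.update (Fin.cons y v) i.succ x)
            - f (Function.update (Fin.cons y v) i.succ x') := by
        intro y
        show f (e.symm (y, Function.update v i x)) - f (e.symm (y, Function.update v i x')) = _
        rw [hsymm, hsymm, ← Fin.cons_update, ← Fin.cons_update]
      rw [hF, ← integral_sub (hint_slice _) (hint_slice _)]
      have := norm_integral_le_of_norm_le (μ := μ)
        (f := fun y => f' (y, Function.update v i x) - f' (y, Function.update v i x'))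
        (integrable_const c) (Filter.Eventually.of_forall fun y => by
          show ‖f' (y, Function.update v i x) - f' (y, Function.update v i x')‖ ≤ c
          rw [Real.norm_eq_abs, key y]; exact hdiff i.succ (Fin.cons y v) x x')
      simpa using this
    -- mean of F equals mean of f
    set m : ℝ := ∫ v, f v ∂πN with hm
    have hf'int : Integrable f' (μ.prod πn) := integrable_of_bdd hf'meas hf'bdd
    have hmF : (∫ v, F v ∂πn) = m := by
      have h1 : m = ∫ z, f' z ∂(μ.prod πn) :=
        (hMP.integral_comp e.symm.measurableEmbedding f).symm
      rw [h1, integral_prod _ hf'int, hF]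
      exact (integral_integral_swap (f := fun x v => f' (x, v)) hf'int).symm
    -- pairwise first-coordinate oscillation
    have hdiff0 : ∀ (v : Fin n → W) (x x' : W), |f' (x, v) - f' (x', v)| ≤ c := by
      intro v x x'
      have h1 : f' (x, v) = f (Function.update (Fin.cons x v) 0 x) := by
        show f (e.symm (x, v)) = _
        rw [hsymm, Fin.update_cons_zero]
      have h2 : f' (x', v) = f (Function.update (Fin.cons x v) 0 x') := by
        show f (e.symm (x', v)) = _
        rw [hsymm, Fin.update_cons_zero]
      rw [h1, h2]
      exact hdiff 0 (Fin.cons x v) x x'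
    set C : ℝ := Real.exp (|t| * (M + |m|)) with hC
    have hexbd : ∀ (r : ℝ), |r| ≤ M → |Real.exp (t * (r - m))| ≤ C := by
      intro r hr
      rw [abs_of_pos (Real.exp_pos _), hC, Real.exp_le_exp]
      calc t * (r - m) ≤ |t * (r - m)| := le_abs_self _
        _ = |t| * |r - m| := abs_mul _ _
        _ ≤ |t| * (M + |m|) := by
            apply mul_le_mul_of_nonneg_left _ (abs_nonneg t)
            calc |r - m| ≤ |r| + |m| := abs_sub _ _
              _ ≤ M + |m| := by linarith
    have hexmeas : Measurable fun z => Real.exp (t * (f' z - m)) :=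
      (((hf'meas.sub measurable_const).const_mul t).exp)
    have hexint : Integrable (fun z => Real.exp (t * (f' z - m))) (μ.prod πn) :=
      integrable_of_bdd hexmeas (fun z => hexbd _ (hf'bdd z))
    -- inner integral bound
    have hinner : ∀ v : Fin n → W,
        (∫ x, Real.exp (t * (f' (x, v) - m)) ∂μ)
          ≤ Real.exp (t ^ 2 * c ^ 2 / 8) * Real.exp (t * (F v - m)) := by
      intro v
      set A : ℝ := sInf (Set.range fun x => f' (x, v)) with hA
      have hne : (Set.range fun x => f' (x, v)).Nonempty :=
        Set.range_nonempty _
      have hbb : BddBelow (Set.range fun x => f' (x, v)) := by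
        refine ⟨-M, fun r hr => ?_⟩
        obtain ⟨x, rfl⟩ := hr
        exact neg_le_of_abs_le (hf'bdd _)
      have hAle : ∀ x, A ≤ f' (x, v) := fun x => csInf_le hbb ⟨x, rfl⟩
      have hleA : ∀ x, f' (x, v) ≤ A + c := by
        intro x
        have : f' (x, v) - c ≤ A := by
          apply le_csInf hne
          rintro r ⟨x', rfl⟩
          have := hdiff0 v x x'
          have := abs_le.1 this
          linarith [this.2]
        linarith
      set X : W → ℝ := fun x => f' (x, v) - F v with hX
      have hXmeas : Measurable X :=
        (hf'meas.comp (measurable_id.prodMk measurable_const)).sub measurable_const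
      have hXrange : ∀ x, X x ∈ Set.Icc (A - F v) (A + c - F v) := fun x =>
        ⟨by simp only [hX]; linarith [hAle x], by simp only [hX]; linarith [hleA x]⟩
      have hXmean : ∫ x, X x ∂μ = 0 := by
        rw [hX]
        rw [integral_sub (hint_slice v) (integrable_const _), integral_const]
        simp [hF]
      have hH := hoeffding_lemma μ hXmeas hXrange hXmean t
      have hfac : ∀ x, Real.exp (t * (f' (x, v) - m))
          = Real.exp (t * X x) * Real.exp (t * (F v - m)) := by
        intro x
        rw [← Real.exp_add]
        congr 1
        simp only [hX]; ring
      calc (∫ x, Real.exp (t * (f' (x, v) - m)) ∂μ)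
          = ∫ x, Real.exp (t * X x) * Real.exp (t * (F v - m)) ∂μ := by
            exact integral_congr_ae (Filter.Eventually.of_forall fun x => hfac x)
        _ = (∫ x, Real.exp (t * X x) ∂μ) * Real.exp (t * (F v - m)) :=
            integral_mul_const _ _
        _ ≤ Real.exp (t ^ 2 * ((A + c - F v) - (A - F v)) ^ 2 / 8)
              * Real.exp (t * (F v - m)) :=
            mul_le_mul_of_nonneg_right hH (Real.exp_pos _).le
        _ = Real.exp (t ^ 2 * c ^ 2 / 8) * Real.exp (t * (F v - m)) := by
            ring_nf
    -- assemble
    have hG1meas : Measurable fun v => ∫ x, Real.exp (t * (f' (x, v) - m)) ∂μ :=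
      (hexmeas.stronglyMeasurable.integral_prod_left').measurable
    have hG1int : Integrable (fun v => ∫ x, Real.exp (t * (f' (x, v) - m)) ∂μ) πn := by
      apply integrable_of_bdd hG1meas (C := C)
      intro v
      have h1 : |∫ x, Real.exp (t * (f' (x, v) - m)) ∂μ| ≤ ∫ x, C ∂μ := by
        have := norm_integral_le_of_norm_le (μ := μ)
          (f := fun x => Real.exp (t * (f' (x, v) - m)))
          (integrable_const C) (Filter.Eventually.of_forall fun x => by
            rw [Real.norm_eq_abs]; exact hexbd _ (hf'bdd _))
        simpa using this
      simpa using h1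
    have hG2int : Integrable (fun v => Real.exp (t ^ 2 * c ^ 2 / 8)
        * Real.exp (t * (F v - m))) πn := by
      apply Integrable.const_mul
      exact integrable_of_bdd (((hFmeas.sub measurable_const).const_mul t).exp)
        (fun v => hexbd _ (hFbdd v))
    calc ∫ w, Real.exp (t * (f w - m)) ∂πN
        = ∫ z, Real.exp (t * (f' z - m)) ∂(μ.prod πn) :=
          (hMP.integral_comp e.symm.measurableEmbedding
            (fun w => Real.exp (t * (f w - m)))).symm
      _ = ∫ x, ∫ v, Real.exp (t * (f' (x, v) - m)) ∂πn ∂μ := integral_prod _ hexint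
      _ = ∫ v, ∫ x, Real.exp (t * (f' (x, v) - m)) ∂μ ∂πn :=
          integral_integral_swap (f := fun x v => Real.exp (t * (f' (x, v) - m))) hexint
      _ ≤ ∫ v, Real.exp (t ^ 2 * c ^ 2 / 8) * Real.exp (t * (F v - m)) ∂πn :=
          integral_mono hG1int hG2int hinner
      _ = Real.exp (t ^ 2 * c ^ 2 / 8) * ∫ v, Real.exp (t * (F v - m)) ∂πn :=
          integral_const_mul _ _
      _ ≤ Real.exp (t ^ 2 * c ^ 2 / 8) * Real.exp (n * (t ^ 2 * c ^ 2 / 8)) := by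
          apply mul_le_mul_of_nonneg_left _ (Real.exp_pos _).le
          have := IH F hFmeas hFbdd hFdiff
          rwa [hmF] at this
      _ = Real.exp ((n + 1 : ℕ) * (t ^ 2 * c ^ 2 / 8)) := by
          rw [← Real.exp_add]
          congr 1
          push_cast
          ring

open Real ProbabilityTheory in
private lemma mcdiarmid_tail {W : Type*} [MeasurableSpace W] (μ : Measure W)
    [IsProbabilityMeasure μ] {n : ℕ} (hn : 0 < n) {c M : ℝ} (hc : 0 < c)
    {f : (Fin n → W) → ℝ} (hf : Measurable f) (hbdd : ∀ w, |f w| ≤ M)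
    (hdiff : ∀ (i : Fin n) (w : Fin n → W) (x x' : W),
      |f (Function.update w i x) - f (Function.update w i x')| ≤ c)
    {ε : ℝ} (hε : 0 < ε) :
    (Measure.pi fun _ : Fin n => μ)
        {w | ε ≤ |f w - ∫ v, f v ∂(Measure.pi fun _ : Fin n => μ)|}
      ≤ ENNReal.ofReal (2 * Real.exp (-2 * ε ^ 2 / (n * c ^ 2))) := by
  set pp : Measure (Fin n → W) := Measure.pi fun _ : Fin n => μ with hpp
  set m : ℝ := ∫ v, f v ∂pp with hm
  set X : (Fin n → W) → ℝ := fun w => f w - m with hX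
  have hXmeas : Measurable X := hf.sub measurable_const
  have hXbdd : ∀ w, |X w| ≤ M + |m| := fun w => by
    calc |X w| ≤ |f w| + |m| := abs_sub _ _
      _ ≤ M + |m| := by linarith [hbdd w]
  set t : ℝ := 4 * ε / (n * c ^ 2) with ht
  have hnpos : (0:ℝ) < n := Nat.cast_pos.2 hn
  have htpos : 0 < t := by rw [ht]; positivity
  have hint : ∀ s : ℝ, Integrable (fun w => Real.exp (s * X w)) pp := by
    intro s
    apply integrable_of_bdd ((hXmeas.const_mul s).exp) (C := Real.exp (|s| * (M + |m|)))
    intro w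
    rw [abs_of_pos (Real.exp_pos _), Real.exp_le_exp]
    calc s * X w ≤ |s * X w| := le_abs_self _
      _ = |s| * |X w| := abs_mul _ _
      _ ≤ |s| * (M + |m|) := mul_le_mul_of_nonneg_left (hXbdd w) (abs_nonneg s)
  have hexp_eq : -t * ε + n * (t ^ 2 * c ^ 2 / 8) = -2 * ε ^ 2 / (n * c ^ 2) := by
    rw [ht]
    field_simp
    ring
  have hmgf_up : mgf X pp t ≤ Real.exp (n * (t ^ 2 * c ^ 2 / 8)) := by
    have := mcdiarmid_mgf μ hc.le t n f hf hbdd hdiff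
    simpa [mgf, hX, hm, hpp] using this
  have hmgf_dn : mgf X pp (-t) ≤ Real.exp (n * (t ^ 2 * c ^ 2 / 8)) := by
    have := mcdiarmid_mgf μ hc.le (-t) n f hf hbdd hdiff
    simp only [mgf, hX, hm, hpp]
    calc (∫ w, Real.exp (-t * (f w - m)) ∂pp)
        ≤ Real.exp (n * ((-t) ^ 2 * c ^ 2 / 8)) := by simpa [hm, hpp] using this
      _ = Real.exp (n * (t ^ 2 * c ^ 2 / 8)) := by ring_nf
  have h_up : (pp {w | ε ≤ X w}).toReal ≤ Real.exp (-2 * ε ^ 2 / (n * c ^ 2)) := by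
    calc (pp {w | ε ≤ X w}).toReal ≤ Real.exp (-t * ε) * mgf X pp t :=
          measure_ge_le_exp_mul_mgf ε htpos.le (hint t)
      _ ≤ Real.exp (-t * ε) * Real.exp (n * (t ^ 2 * c ^ 2 / 8)) :=
          mul_le_mul_of_nonneg_left hmgf_up (Real.exp_pos _).le
      _ = Real.exp (-2 * ε ^ 2 / (n * c ^ 2)) := by rw [← Real.exp_add, hexp_eq]
  have h_dn : (pp {w | X w ≤ -ε}).toReal ≤ Real.exp (-2 * ε ^ 2 / (n * c ^ 2)) := by
    calc (pp {w | X w ≤ -ε}).toReal ≤ Real.exp (-(-t) * (-ε)) * mgf X pp (-t) :=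
          measure_le_le_exp_mul_mgf (-ε) (neg_nonpos.2 htpos.le) (hint (-t))
      _ = Real.exp (-t * ε) * mgf X pp (-t) := by ring_nf
      _ ≤ Real.exp (-t * ε) * Real.exp (n * (t ^ 2 * c ^ 2 / 8)) :=
          mul_le_mul_of_nonneg_left hmgf_dn (Real.exp_pos _).le
      _ = Real.exp (-2 * ε ^ 2 / (n * c ^ 2)) := by rw [← Real.exp_add, hexp_eq]
  have hsub : {w | ε ≤ |X w|} ⊆ {w | ε ≤ X w} ∪ {w | X w ≤ -ε} := by
    intro w hw
    simp only [Set.mem_setOf_eq] at hw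
    rcases le_or_gt ε (X w) with h | h
    · exact Or.inl h
    · right
      rcases abs_cases (X w) with ⟨habs, _⟩ | ⟨habs, _⟩
      · linarith [hw.trans_eq habs]
      · show X w ≤ -ε
        linarith [habs ▸ hw]
  have hfin1 : pp {w | ε ≤ X w} ≠ ⊤ := measure_ne_top _ _
  have hfin2 : pp {w | X w ≤ -ε} ≠ ⊤ := measure_ne_top _ _
  calc pp {w | ε ≤ |f w - m|} = pp {w | ε ≤ |X w|} := rfl
    _ ≤ pp ({w | ε ≤ X w} ∪ {w | X w ≤ -ε}) := measure_mono hsub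
    _ ≤ pp {w | ε ≤ X w} + pp {w | X w ≤ -ε} := measure_union_le _ _
    _ ≤ ENNReal.ofReal (Real.exp (-2 * ε ^ 2 / (n * c ^ 2)))
          + ENNReal.ofReal (Real.exp (-2 * ε ^ 2 / (n * c ^ 2))) := by
        gcongr
        · exact (ENNReal.le_ofReal_iff_toReal_le hfin1 (Real.exp_pos _).le).2 h_up
        · exact (ENNReal.le_ofReal_iff_toReal_le hfin2 (Real.exp_pos _).le).2 h_dn
    _ = ENNReal.ofReal (2 * Real.exp (-2 * ε ^ 2 / (n * c ^ 2))) := by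
        rw [← ENNReal.ofReal_add (Real.exp_pos _).le (Real.exp_pos _).le]
        congr 1
        ring

/-- McDiarmid concentration of the CIRCE statistic: for i.i.d. samples
`w₁, …, w_B ~ μ` and bounded measurable symmetric kernels,
`T(w) = (1/(B(B-1))) ∑_{j,l} k_x(w_j,w_l) k_t(w_j,w_l)` satisfies
`P(|T - E T| ≥ ε) ≤ 2 exp(-2 ε² B (B-1)² / ((4B-2)² K_x² K_t²))`. -/
theorem circe_mcdiarmid
    {W : Type*} [MeasurableSpace W] (μ : Measure W) [IsProbabilityMeasure μ]
    (B : ℕ) (hB : 2 ≤ B)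
    (kx kt : W → W → ℝ)
    (hmx : Measurable (Function.uncurry kx))
    (hmt : Measurable (Function.uncurry kt))
    (hsx : ∀ a b, kx a b = kx b a)
    (hst : ∀ a b, kt a b = kt b a)
    (Kx Kt : ℝ) (hKx : 0 < Kx) (hKt : 0 < Kt)
    (hbx : ∀ a b, |kx a b| ≤ Kx)
    (hbt : ∀ a b, |kt a b| ≤ Kt)
    (T : (Fin B → W) → ℝ)
    (hT : ∀ w, T w = (1 / ((B : ℝ) * ((B : ℝ) - 1))) *
      ∑ j, ∑ l, kx (w j) (w l) * kt (w j) (w l))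
    (ε : ℝ) (hε : 0 < ε) :
    (Measure.pi fun _ : Fin B => μ)
        {w | ε ≤ |T w - ∫ v, T v ∂(Measure.pi fun _ : Fin B => μ)|}
      ≤ ENNReal.ofReal (2 * Real.exp
          (-(2 * ε ^ 2 * (B : ℝ) * ((B : ℝ) - 1) ^ 2)
            / ((4 * (B : ℝ) - 2) ^ 2 * Kx ^ 2 * Kt ^ 2))) := by
  have hB2 : (2:ℝ) ≤ (B:ℝ) := by exact_mod_cast hB
  have hBpos : (0:ℝ) < B := by linarith
  have hB1pos : (0:ℝ) < (B:ℝ) - 1 := by linarith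
  set K : ℝ := Kx * Kt with hK
  have hKpos : 0 < K := mul_pos hKx hKt
  set h : W → W → ℝ := fun a b => kx a b * kt a b with hh
  have hbh : ∀ a b, |h a b| ≤ K := by
    intro a b
    rw [hh, hK, abs_mul]
    exact mul_le_mul (hbx a b) (hbt a b) (abs_nonneg _) hKx.le
  set c : ℝ := (4 * (B:ℝ) - 2) * K / ((B:ℝ) * ((B:ℝ) - 1)) with hc
  have hcpos : 0 < c := by
    rw [hc]
    apply div_pos (mul_pos (by linarith) hKpos) (mul_pos hBpos hB1pos)
  set M : ℝ := (1 / ((B : ℝ) * ((B : ℝ) - 1))) * ((B:ℝ) * (B:ℝ) * K) with hM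
  -- measurability of T
  have hTmeas : Measurable T := by
    have : T = fun w => (1 / ((B : ℝ) * ((B : ℝ) - 1))) *
        ∑ j, ∑ l, kx (w j) (w l) * kt (w j) (w l) := funext hT
    rw [this]
    apply Measurable.const_mul
    apply Finset.measurable_sum
    intro j _
    apply Finset.measurable_sum
    intro l _
    have m1 : Measurable fun w : Fin B → W => kx (w j) (w l) := by
      have hcomp : Measurable (Function.uncurry kx ∘ fun w : Fin B → W => (w j, w l)) :=
        hmx.comp ((measurable_pi_apply j).prodMk (measurable_pi_apply l))
      exact hcomp
    have m2 : Measurable fun w : Fin B → W => kt (w j) (w l) := by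
      have hcomp : Measurable (Function.uncurry kt ∘ fun w : Fin B → W => (w j, w l)) :=
        hmt.comp ((measurable_pi_apply j).prodMk (measurable_pi_apply l))
      exact hcomp
    exact m1.mul m2
  -- boundedness of T
  have hconstpos : (0:ℝ) < 1 / ((B : ℝ) * ((B : ℝ) - 1)) := by positivity
  have hTbdd : ∀ w, |T w| ≤ M := by
    intro w
    rw [hT w, hM, abs_mul, abs_of_pos hconstpos]
    apply mul_le_mul_of_nonneg_left _ hconstpos.le
    calc |∑ j, ∑ l, kx (w j) (w l) * kt (w j) (w l)|
        ≤ ∑ j : Fin B, |∑ l, kx (w j) (w l) * kt (w j) (w l)| :=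
          Finset.abs_sum_le_sum_abs _ _
      _ ≤ ∑ _j : Fin B, ∑ _l : Fin B, K := by
          apply Finset.sum_le_sum
          intro j _
          calc |∑ l, kx (w j) (w l) * kt (w j) (w l)|
              ≤ ∑ l, |kx (w j) (w l) * kt (w j) (w l)| := Finset.abs_sum_le_sum_abs _ _
            _ ≤ ∑ _l : Fin B, K := Finset.sum_le_sum fun l _ => hbh _ _
      _ = (B:ℝ) * (B:ℝ) * K := by
          simp [Finset.sum_const, Finset.card_univ]
          ring
  -- bounded differences of T
  classical
  have hTdiff : ∀ (i : Fin B) (w : Fin B → W) (x x' : W),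
      |T (Function.update w i x) - T (Function.update w i x')| ≤ c := by
    intro i w x x'
    set u := Function.update w i x with hu
    set u' := Function.update w i x' with hu'
    set s : Finset (Fin B × Fin B) := Finset.univ.filter (fun p => p.1 = i ∨ p.2 = i) with hs
    have hcard : s.card = 2 * B - 1 := by
      have hsu : s = (({i} : Finset (Fin B)) ×ˢ (Finset.univ : Finset (Fin B)))
          ∪ ((Finset.univ : Finset (Fin B)) ×ˢ ({i} : Finset (Fin B))) := by
        ext p
        simp only [hs, Finset.mem_filter, Finset.mem_univ, true_and, Finset.mem_union,
          Finset.mem_product, Finset.mem_singleton, and_true]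
      have hin : ((({i} : Finset (Fin B)) ×ˢ (Finset.univ : Finset (Fin B)))
          ∩ ((Finset.univ : Finset (Fin B)) ×ˢ ({i} : Finset (Fin B))))
          = ({i} : Finset (Fin B)) ×ˢ ({i} : Finset (Fin B)) := by
        ext p
        simp only [Finset.mem_inter, Finset.mem_product, Finset.mem_singleton,
          Finset.mem_univ, true_and, and_true]
      have hcu := Finset.card_union_add_card_inter
        (({i} : Finset (Fin B)) ×ˢ (Finset.univ : Finset (Fin B)))
        ((Finset.univ : Finset (Fin B)) ×ˢ ({i} : Finset (Fin B)))
      rw [hin] at hcu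
      simp only [Finset.card_product, Finset.card_singleton, Finset.card_univ,
        Fintype.card_fin, one_mul, mul_one] at hcu
      rw [hsu]
      omega
    have hterm : ∀ p : Fin B × Fin B, p ∉ s →
        h (u p.1) (u p.2) - h (u' p.1) (u' p.2) = 0 := by
      intro p hp
      simp only [hs, Finset.mem_filter, Finset.mem_univ, true_and, not_or] at hp
      rw [hu, hu']
      rw [Function.update_of_ne hp.1, Function.update_of_ne hp.2,
        Function.update_of_ne hp.1, Function.update_of_ne hp.2]
      ring
    have hsum : (∑ j, ∑ l, h (u j) (u l)) - (∑ j, ∑ l, h (u' j) (u' l))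
        = ∑ p ∈ s, (h (u p.1) (u p.2) - h (u' p.1) (u' p.2)) := by
      rw [← Finset.sum_product' (f := fun j l => h (u j) (u l)),
        ← Finset.sum_product' (f := fun j l => h (u' j) (u' l)),
        Finset.univ_product_univ, ← Finset.sum_sub_distrib]
      exact (Finset.sum_subset (Finset.subset_univ s) (fun p _ hp => hterm p hp)).symm
    have habs : |(∑ j, ∑ l, h (u j) (u l)) - (∑ j, ∑ l, h (u' j) (u' l))|
        ≤ (2 * (B:ℝ) - 1) * (2 * K) := by
      rw [hsum]
      calc |∑ p ∈ s, (h (u p.1) (u p.2) - h (u' p.1) (u' p.2))|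
          ≤ ∑ p ∈ s, |h (u p.1) (u p.2) - h (u' p.1) (u' p.2)| :=
            Finset.abs_sum_le_sum_abs _ _
        _ ≤ ∑ _p ∈ s, (2 * K) := by
            apply Finset.sum_le_sum
            intro p _
            calc |h (u p.1) (u p.2) - h (u' p.1) (u' p.2)|
                ≤ |h (u p.1) (u p.2)| + |h (u' p.1) (u' p.2)| := abs_sub _ _
              _ ≤ 2 * K := by linarith [hbh (u p.1) (u p.2), hbh (u' p.1) (u' p.2)]
        _ = (s.card : ℝ) * (2 * K) := by rw [Finset.sum_const, nsmul_eq_mul]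
        _ = (2 * (B:ℝ) - 1) * (2 * K) := by
            rw [hcard]
            congr 1
            have : (1:ℕ) ≤ 2 * B := by omega
            push_cast [Nat.cast_sub this]
            ring
    rw [hT, hT, ← mul_sub, abs_mul, abs_of_pos hconstpos]
    calc (1 / ((B : ℝ) * ((B : ℝ) - 1)))
          * |(∑ j, ∑ l, h (u j) (u l)) - (∑ j, ∑ l, h (u' j) (u' l))|
        ≤ (1 / ((B : ℝ) * ((B : ℝ) - 1))) * ((2 * (B:ℝ) - 1) * (2 * K)) :=
          mul_le_mul_of_nonneg_left habs hconstpos.le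
      _ = c := by rw [hc]; field_simp; ring
  have hBn : 0 < B := by omega
  have hmain := mcdiarmid_tail μ hBn hcpos hTmeas hTbdd hTdiff hε
  have heq : -2 * ε ^ 2 / ((B:ℝ) * c ^ 2)
      = -(2 * ε ^ 2 * (B : ℝ) * ((B : ℝ) - 1) ^ 2)
          / ((4 * (B : ℝ) - 2) ^ 2 * Kx ^ 2 * Kt ^ 2) := by
    have h1 : (B:ℝ) ≠ 0 := hBpos.ne'
    have h2 : (B:ℝ) - 1 ≠ 0 := hB1pos.ne'
    have h3 : (4 * (B:ℝ) - 2) ≠ 0 := by linarith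
    have h4 : Kx ≠ 0 := hKx.ne'
    have h5 : Kt ≠ 0 := hKt.ne'
    rw [hc, hK]
    field_simp
  rw [heq] at hmain
  exact hmain
end
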